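/- The factorization in the previous statement is unique: if ι(C) = [[I,0],[E₁,I]]·[[I,D],[0,I]]·[[I,0],[E₂,I]]·[[R,0],[0,(R⁻¹)ᵗ]] with E₁, E₂ ∈ o(V) and R ∈ GL(V) all commuting with C and D, then necessarily R = D(I − C⁻¹)⁻¹, E₁ = (1/2)(C+I)(C−I)⁻¹ − D⁻¹, and E₂ = D⁻²((C − C⁻¹)/2 − D). -/

import Mathlib

/-!
Multiplying out, the `(0,1)`, `(1,1)` and `(0,0)` entries of the block identity read
`C - 1 = D X`, `(C + 1)/2 = (E₁ D + 1) X` and `(C + 1)/2 = (1 + D E₂) R`, where `X = (R⁻¹)ᵗ`.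
The first gives `X = D⁻¹ (C - 1)`. As `C` is orthogonal and `D` skew, the adjoint of this is
`(1 - C⁻¹) D⁻¹`, so by nondegeneracy `R⁻¹ = (1 - C⁻¹) D⁻¹`. The other two entries are then
solved for `E₁` and `E₂` in the ring `End V`, where `D` commutes with `C - C⁻¹`.
-/

open scoped Ring

namespace Ring

variable {M₀ : Type*} [MonoidWithZero M₀]

theorem inverse_neg [HasDistribNeg M₀] (a : M₀) : (-a)⁻¹ʳ = -a⁻¹ʳ := by
  by_cases ha : IsUnit a
  · obtain ⟨u, rfl⟩ := ha
    rw [← Units.val_neg, inverse_unit, inverse_unit, inv_neg, Units.val_neg]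
  · rw [inverse_non_unit _ ha, inverse_non_unit _ (mt (IsUnit.neg_iff a).mp ha), neg_zero]

end Ring

theorem Commute.ringInverse_right {M₀ : Type*} [MonoidWithZero M₀] {a b : M₀}
    (h : Commute a b) : Commute a b⁻¹ʳ := by
  by_cases hb : IsUnit b
  · obtain ⟨u, rfl⟩ := hb
    rw [Ring.inverse_unit]
    exact h.units_inv_right
  · rw [Ring.inverse_non_unit _ hb]
    exact Commute.zero_right a

section Ring

variable {A : Type*} [Ring A]

theorem isUnit_one_sub_inverse {c : A} (hc : IsUnit c) (hc1 : IsUnit (c - 1)) :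
    IsUnit (1 - c⁻¹ʳ) := by
  rw [show 1 - c⁻¹ʳ = c⁻¹ʳ * (c - 1) by rw [mul_sub, Ring.inverse_mul_cancel _ hc, mul_one]]
  exact hc.ringInverse.mul hc1

theorem eq_mul_inverse_of_inverse_eq_mul_inverse {r a d : A} (hr : IsUnit r) (ha : IsUnit a)
    (hd : IsUnit d) (h : r⁻¹ʳ = a * d⁻¹ʳ) : r = d * a⁻¹ʳ :=
  (Ring.eq_mul_inverse_iff_mul_eq _ _ _ ha).2 <| by
    rw [← Ring.inverse_mul_cancel_right d (r * a) hd, mul_assoc r, ← h,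
      Ring.mul_inverse_cancel _ hr, one_mul]

theorem eq_mul_inverse_sub_inverse_of_eq_mul {e d c p : A} (hd : IsUnit d) (hc : IsUnit c)
    (h : p = (e * d + 1) * (d⁻¹ʳ * c)) : e = p * c⁻¹ʳ - d⁻¹ʳ := by
  have hp : (e + d⁻¹ʳ) * c = p := by
    rw [h, ← mul_assoc, add_mul (e * d), Ring.mul_inverse_cancel_right _ _ hd, one_mul, add_mul]
  exact eq_sub_of_add_eq ((Ring.eq_mul_inverse_iff_mul_eq _ _ _ hc).2 hp)

theorem eq_inverse_mul_sub_of_eq_one_add_mul_mul {e d r a p : A} (hd : IsUnit d) (hr : IsUnit r)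
    (hpa : Commute d (p * a)) (h : p = (1 + d * e) * r) (hrinv : r⁻¹ʳ = a * d⁻¹ʳ) :
    e = (d * d)⁻¹ʳ * (p * a - d) := by
  have hde : 1 + d * e = p * a * d⁻¹ʳ := by
    rw [mul_assoc, ← hrinv, h, Ring.mul_inverse_cancel_right _ _ hr]
  rw [eq_comm, Ring.inverse_mul_eq_iff_eq_mul _ _ _ (hd.mul hd)]
  calc p * a - d = d * (p * a * d⁻¹ʳ) - d := by
        rw [← mul_assoc, hpa.eq, Ring.mul_inverse_cancel_right _ _ hd]
    _ = d * d * e := by rw [← hde]; noncomm_ring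

end Ring

theorem Matrix.lower_upper_lower_diag_mul_fin_two {A : Type*} [Ring A] (e₁ d e₂ r x : A) :
    !![1, 0; e₁, 1] * !![1, d; 0, 1] * !![1, 0; e₂, 1] * !![r, 0; 0, x] =
      !![(1 + d * e₂) * r, d * x; (e₁ + (e₁ * d + 1) * e₂) * r, (e₁ * d + 1) * x] := by
  simp only [Matrix.mul_fin_two]
  congr 1; noncomm_ring

namespace LinearMap

variable {R M : Type*} [CommRing R] [AddCommGroup M] [Module R M] {B : LinearMap.BilinForm R M}

theorem BilinForm.isAdjointPair_right_unique_of_nondegenerate (hB : B.Nondegenerate)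
    {f g g' : Module.End R M} (h : IsAdjointPair B B f g) (h' : IsAdjointPair B B f g') :
    g = g' :=
  B.flip.isAdjointPair_unique_of_nondegenerate hB.flip f g g'
    (fun x y => (h y x).symm) (fun x y => (h' y x).symm)

theorem _root_.Module.End.apply_ringInverse_apply {f : Module.End R M} (hf : IsUnit f) (x : M) :
    f (f⁻¹ʳ x) = x := by
  rw [← Module.End.mul_apply, Ring.mul_inverse_cancel _ hf, Module.End.one_apply]

theorem IsAdjointPair.ringInverse {f g : Module.End R M} (h : IsAdjointPair B B f g)
    (hf : IsUnit f) (hg : IsUnit g) : IsAdjointPair B B ⇑f⁻¹ʳ ⇑g⁻¹ʳ := fun x y => by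
  conv_lhs => rw [← Module.End.apply_ringInverse_apply hg y]
  rw [← h, Module.End.apply_ringInverse_apply hf]

theorem IsOrthogonal.isAdjointPair_ringInverse {f : Module.End R M} (hf : B.IsOrthogonal f)
    (hu : IsUnit f) : IsAdjointPair B B ⇑f ⇑f⁻¹ʳ := fun x y => by
  conv_lhs => rw [← Module.End.apply_ringInverse_apply hu y]
  exact hf x _

theorem isAdjointPair_ringInverse_mul_sub_one {c d : Module.End R M} (hc : B.IsOrthogonal c)
    (hcu : IsUnit c) (hd : B.IsSkewAdjoint d) (hdu : IsUnit d) :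
    IsAdjointPair B B ⇑(d⁻¹ʳ * (c - 1)) ⇑((1 - c⁻¹ʳ) * d⁻¹ʳ) := by
  have hdinv : IsAdjointPair B B ⇑d⁻¹ʳ ⇑(-d⁻¹ʳ) := by
    simpa only [Ring.inverse_neg] using IsAdjointPair.ringInverse (g := -d) hd hdu hdu.neg
  have hcsub : IsAdjointPair B B ⇑(c - 1) ⇑(c⁻¹ʳ - 1) :=
    (hc.isAdjointPair_ringInverse hcu).sub isAdjointPair_one
  convert hdinv.mul hcsub using 2
  noncomm_ring

end LinearMap

theorem iota_factorization_unique_general {V : Type*} [AddCommGroup V] [Module ℝ V]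
    [FiniteDimensional ℝ V]
    (B : LinearMap.BilinForm ℝ V)
    (hB : B.Nondegenerate)
    (t : Module.End ℝ V → Module.End ℝ V)
    (ht : ∀ (T : Module.End ℝ V) (x y : V), B (t T x) y = B x (T y))
    (C D : Module.End ℝ V)
    (hCO : ∀ x y, B (C x) (C y) = B x y) (hCdet : LinearMap.det C = 1)
    (hC1 : LinearMap.det (C - 1) ≠ 0)
    (hDskew : ∀ x y, B (D x) y = - B x (D y)) (hD : IsUnit D)
    (hCD : C * D = D * C)
    (E₁ E₂ R : Module.End ℝ V)
    (hR : IsUnit R)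
    (hfact :
      (!![(1 / 2 : ℝ) • (C + 1), C - 1; (1 / 4 : ℝ) • (C - 1), (1 / 2 : ℝ) • (C + 1)]
          : Matrix (Fin 2) (Fin 2) (Module.End ℝ V)) =
        !![1, 0; E₁, 1] * !![1, D; 0, 1] * !![1, 0; E₂, 1] *
          !![R, 0; 0, t (Ring.inverse R)]) :
    R = D * Ring.inverse (1 - Ring.inverse C) ∧
    E₁ = (1 / 2 : ℝ) • ((C + 1) * Ring.inverse (C - 1)) - Ring.inverse D ∧
    E₂ = Ring.inverse (D * D) * ((1 / 2 : ℝ) • (C - Ring.inverse C) - D) := by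
  have hCu : IsUnit C := (LinearMap.isUnit_iff_isUnit_det C).2 (by simp [hCdet])
  have hC1u : IsUnit (C - 1) := (LinearMap.isUnit_iff_isUnit_det _).2 (isUnit_iff_ne_zero.2 hC1)
  rw [Matrix.lower_upper_lower_diag_mul_fin_two] at hfact
  simp only [EmbeddingLike.apply_eq_iff_eq, Matrix.vecCons_inj, and_true] at hfact
  obtain ⟨⟨h00, h01⟩, -, h11⟩ := hfact
  have hX : t R⁻¹ʳ = D⁻¹ʳ * (C - 1) := ((Ring.inverse_mul_eq_iff_eq_mul _ _ _ hD).2 h01).symm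
  -- Both `R⁻¹` (by definition of `t`) and `(1 - C⁻¹) D⁻¹` are right adjoints of `D⁻¹ (C - 1)`.
  have hRinv : R⁻¹ʳ = (1 - C⁻¹ʳ) * D⁻¹ʳ := by
    have hDskew' : B.IsSkewAdjoint D := fun x y => by simp [hDskew]
    refine LinearMap.BilinForm.isAdjointPair_right_unique_of_nondegenerate hB (ht _) ?_
    rw [hX]
    exact LinearMap.isAdjointPair_ringInverse_mul_sub_one hCO hCu hDskew' hD
  have hPC : (1 / 2 : ℝ) • (C + 1) * (1 - C⁻¹ʳ) = (1 / 2 : ℝ) • (C - C⁻¹ʳ) := by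
    rw [smul_mul_assoc, mul_sub, mul_one, add_mul, Ring.mul_inverse_cancel _ hCu, one_mul]
    congr 1; abel
  have hDC : Commute D C := hCD.symm
  have hDQ : Commute D ((1 / 2 : ℝ) • (C - C⁻¹ʳ)) :=
    (hDC.sub_right hDC.ringInverse_right).smul_right _
  refine ⟨eq_mul_inverse_of_inverse_eq_mul_inverse hR (isUnit_one_sub_inverse hCu hC1u) hD hRinv,
    ?_, ?_⟩
  · rw [← smul_mul_assoc]
    exact eq_mul_inverse_sub_inverse_of_eq_mul hD hC1u (hX ▸ h11)
  · rw [← hPC]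
    exact eq_inverse_mul_sub_of_eq_one_add_mul_mul hD hR (hPC ▸ hDQ) h00 hRinv

/-- Uniqueness of the factorization
`ι(C) = [[I,0],[E₁,I]]·[[I,D],[0,I]]·[[I,0],[E₂,I]]·[[R,0],[0,(R⁻¹)ᵗ]]`:
if `E₁, E₂ ∈ o(V)` and `R ∈ GL(V)` all commute with `C` and `D` and satisfy the block
identity, then necessarily `R = D(I − C⁻¹)⁻¹`, `E₁ = (1/2)(C+I)(C−I)⁻¹ − D⁻¹`, and
`E₂ = D⁻²((C − C⁻¹)/2 − D)`. -/
theorem iota_factorization_unique {V : Type*} [AddCommGroup V] [Module ℝ V]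
    [FiniteDimensional ℝ V]
    (B : LinearMap.BilinForm ℝ V) (hBsym : ∀ x y, B x y = B y x)
    (hB : B.Nondegenerate)
    (t : Module.End ℝ V → Module.End ℝ V)
    (ht : ∀ (T : Module.End ℝ V) (x y : V), B (t T x) y = B x (T y))
    (C D : Module.End ℝ V)
    (hCO : ∀ x y, B (C x) (C y) = B x y) (hCdet : LinearMap.det C = 1)
    (hC1 : LinearMap.det (C - 1) ≠ 0)
    (hDskew : ∀ x y, B (D x) y = - B x (D y)) (hD : IsUnit D)
    (hCD : C * D = D * C)
    (E₁ E₂ R : Module.End ℝ V)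
    (hE₁ : ∀ x y, B (E₁ x) y = - B x (E₁ y))
    (hE₂ : ∀ x y, B (E₂ x) y = - B x (E₂ y))
    (hR : IsUnit R)
    (hE₁C : E₁ * C = C * E₁) (hE₁D : E₁ * D = D * E₁)
    (hE₂C : E₂ * C = C * E₂) (hE₂D : E₂ * D = D * E₂)
    (hRC : R * C = C * R) (hRD : R * D = D * R)
    (hfact :
      (!![(1 / 2 : ℝ) • (C + 1), C - 1; (1 / 4 : ℝ) • (C - 1), (1 / 2 : ℝ) • (C + 1)]
          : Matrix (Fin 2) (Fin 2) (Module.End ℝ V)) =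
        !![1, 0; E₁, 1] * !![1, D; 0, 1] * !![1, 0; E₂, 1] *
          !![R, 0; 0, t (Ring.inverse R)]) :
    R = D * Ring.inverse (1 - Ring.inverse C) ∧
    E₁ = (1 / 2 : ℝ) • ((C + 1) * Ring.inverse (C - 1)) - Ring.inverse D ∧
    E₂ = Ring.inverse (D * D) * ((1 / 2 : ℝ) • (C - Ring.inverse C) - D) :=
  iota_factorization_unique_general B hB t ht C D hCO hCdet hC1 hDskew hD hCD E₁ E₂ R hR hfact
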